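/- arXiv:1706.04044 — 3 statements merged into one kernel-verified Lean document; each statement's English description precedes it below -/
import Mathlib

section
/- For all real x, the second derivative with respect to x of Q(x,-1) = √(1 + √(1+x²)) equals cos((3/2)·arctan x) / (2√2 · (x²+1)^{3/4}). -/
/-!
Write `s = √(1 + x²)` and `q = √(1 + s)`. Differentiating twice, and eliminating `x² = s² - 1`
and `q² = 1 + s`, gives `(2 - s) q / (4 s³)`. On the other side `θ = arctan x` has `cos θ = 1 / s`,
so the half-angle formula gives `cos (θ / 2) = q / √(2 s)` and the triple-angle formula gives
`cos (3θ / 2) = (2 / s - 1) cos (θ / 2)`; with `(x² + 1)^(3/4) = s √s` the right-hand side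
reduces to the same expression.
-/

open Real

lemma rpow_three_div_four_eq_sqrt_mul_sqrt_sqrt {a : ℝ} (ha : 0 ≤ a) :
    a ^ ((3 : ℝ) / 4) = √a * √(√a) := by
  rw [sqrt_eq_rpow, sqrt_eq_rpow, ← rpow_mul ha, ← rpow_add' ha (by norm_num)]
  norm_num

lemma hasDerivAt_sqrt_one_add_sq (x : ℝ) :
    HasDerivAt (fun t : ℝ => √(1 + t ^ 2)) (x / √(1 + x ^ 2)) x := by
  have h : HasDerivAt (fun t : ℝ => 1 + t ^ 2) (2 * x) x := by
    simpa using (hasDerivAt_pow 2 x).const_add 1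
  convert h.sqrt (by positivity) using 1
  field_simp

lemma hasDerivAt_sqrt_one_add_sqrt_one_add_sq (x : ℝ) :
    HasDerivAt (fun t : ℝ => √(1 + √(1 + t ^ 2)))
      (x / (2 * √(1 + x ^ 2) * √(1 + √(1 + x ^ 2)))) x := by
  convert ((hasDerivAt_sqrt_one_add_sq x).const_add 1).sqrt (by positivity) using 1
  field_simp

lemma deriv_sqrt_one_add_sqrt_one_add_sq :
    deriv (fun t : ℝ => √(1 + √(1 + t ^ 2)))
      = fun x => x / (2 * √(1 + x ^ 2) * √(1 + √(1 + x ^ 2))) :=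
  funext fun x => (hasDerivAt_sqrt_one_add_sqrt_one_add_sq x).deriv

lemma hasDerivAt_deriv_sqrt_one_add_sqrt_one_add_sq (x : ℝ) :
    HasDerivAt (deriv fun t : ℝ => √(1 + √(1 + t ^ 2)))
      ((2 - √(1 + x ^ 2)) * √(1 + √(1 + x ^ 2)) / (4 * √(1 + x ^ 2) ^ 3)) x := by
  rw [deriv_sqrt_one_add_sqrt_one_add_sq]
  refine ((hasDerivAt_id' x).fun_div (((hasDerivAt_sqrt_one_add_sq x).const_mul 2).fun_mul
    (hasDerivAt_sqrt_one_add_sqrt_one_add_sq x)) (by positivity)).congr_deriv ?_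
  have hs2 : √(1 + x ^ 2) ^ 2 = 1 + x ^ 2 := sq_sqrt (by positivity)
  have hq2 : √(1 + √(1 + x ^ 2)) ^ 2 = 1 + √(1 + x ^ 2) := sq_sqrt (by positivity)
  set s := √(1 + x ^ 2)
  set q := √(1 + s)
  have hs0 : 0 < s := by positivity
  have hq0 : 0 < q := by positivity
  field_simp
  linear_combination (4 * (2 * q ^ 2 + s)) * hs2 + (8 - 4 * (2 - s) * (q ^ 2 + 1 + s)) * hq2

lemma cos_three_div_two_mul_arctan (x : ℝ) :
    cos (3 / 2 * arctan x) = (2 / √(1 + x ^ 2) - 1) * cos (arctan x / 2) := by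
  rw [show 3 / 2 * arctan x = 3 * (arctan x / 2) by ring, cos_three_mul]
  have h := cos_sq (arctan x / 2)
  rw [show 2 * (arctan x / 2) = arctan x by ring, cos_arctan] at h
  linear_combination cos (arctan x / 2) * 4 * h

lemma cos_arctan_div_two (x : ℝ) :
    cos (arctan x / 2) = √(1 + √(1 + x ^ 2)) / (√2 * √(√(1 + x ^ 2))) := by
  rw [cos_half (by linarith [neg_pi_div_two_lt_arctan x, pi_pos])
    (by linarith [arctan_lt_pi_div_two x, pi_pos]), cos_arctan, ← sqrt_mul zero_le_two,
    ← sqrt_div' _ (by positivity)]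
  congr 1
  field_simp
  ring

/-- The second derivative of √(1+√(1+x²)) equals
cos((3/2) arctan x)/(2√2 (x²+1)^{3/4}). -/
theorem stmt14 (x : ℝ) :
    deriv (deriv (fun t : ℝ => Real.sqrt (1 + Real.sqrt (1 + t ^ 2)))) x
      = Real.cos ((3 / 2) * Real.arctan x) /
          (2 * Real.sqrt 2 * (x ^ 2 + 1) ^ ((3 : ℝ) / 4)) := by
  rw [(hasDerivAt_deriv_sqrt_one_add_sqrt_one_add_sq x).deriv, cos_three_div_two_mul_arctan,
    cos_arctan_div_two, add_comm (x ^ 2) 1, rpow_three_div_four_eq_sqrt_mul_sqrt_sqrt (by positivity)]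
  have hr2 : √(√(1 + x ^ 2)) ^ 2 = √(1 + x ^ 2) := sq_sqrt (by positivity)
  have hd2 : √2 ^ 2 = 2 := sq_sqrt zero_le_two
  set s := √(1 + x ^ 2)
  set r := √s
  set d := √2
  have hs0 : 0 < s := by positivity
  have hr0 : 0 < r := by positivity
  have hd0 : 0 < d := by positivity
  field_simp
  linear_combination 2 * (2 - s) * d ^ 2 * hr2 + 2 * (2 - s) * s * hd2
end

section
/- As (x,y) → (0,0) with y < 0, the function U₀(x,y) = -e^y·sin x/(1 - 2e^y·cos x + e^{2y}) satisfies U₀(x,y) = -x/(x²+y²) + O(1); i.e. the difference U₀(x,y) + x/(x²+y²) remains bounded near the origin. -/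
/-!
With `z = y + i x` one has `U₀(x, y) = -Im (1 - e^z)⁻¹` and `x / (x² + y²) = -Im z⁻¹`, so the
difference is `-Im ((1 - e^z)⁻¹ + z⁻¹) = -Im ((z + 1 - e^z) / ((1 - e^z) z))`. For `‖z‖ ≤ 1/2` the
numerator is at most `‖z‖²` and `‖1 - e^z‖ ≥ ‖z‖ / 2`, so the difference is at most `2`.
-/

noncomputable def U0 (x y : ℝ) : ℝ :=
  -Real.exp y * Real.sin x / (1 - 2 * Real.exp y * Real.cos x + Real.exp (2 * y))

open Complex

lemma U0_eq_neg_im_inv_one_sub_exp (x y : ℝ) : U0 x y = -((1 - exp ⟨y, x⟩)⁻¹).im := by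
  have hexp2 : Real.exp (2 * y) = Real.exp y ^ 2 := by rw [← Real.exp_nat_mul]; norm_num
  have hdenom : 1 - 2 * Real.exp y * Real.cos x + Real.exp (2 * y)
      = (1 - Real.exp y * Real.cos x) ^ 2 + (Real.exp y * Real.sin x) ^ 2 := by
    linear_combination hexp2 - Real.exp y ^ 2 * Real.sin_sq_add_cos_sq x
  simp only [U0, hdenom, inv_im, normSq_apply, sub_re, sub_im, one_re, one_im, exp_re, exp_im]
  ring

lemma div_sq_add_sq_eq_neg_im_inv (x y : ℝ) : x / (x ^ 2 + y ^ 2) = -((⟨y, x⟩ : ℂ)⁻¹).im := by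
  simp only [inv_im, normSq_apply]
  ring

lemma half_norm_le_norm_one_sub_exp {z : ℂ} (hz : ‖z‖ ≤ 1 / 2) : ‖z‖ / 2 ≤ ‖1 - exp z‖ := by
  have hquad := norm_exp_sub_one_sub_id_le (x := z) (by linarith)
  have htri : ‖z‖ ≤ ‖1 - exp z‖ + ‖exp z - 1 - z‖ :=
    calc ‖z‖ = ‖-(1 - exp z) - (exp z - 1 - z)‖ := by congr 1; ring
      _ ≤ ‖-(1 - exp z)‖ + ‖exp z - 1 - z‖ := norm_sub_le _ _
      _ = _ := by rw [norm_neg]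
  nlinarith [norm_nonneg z]

lemma norm_inv_one_sub_exp_add_inv_le {z : ℂ} (hz0 : z ≠ 0) (hz : ‖z‖ ≤ 1 / 2) :
    ‖(1 - exp z)⁻¹ + z⁻¹‖ ≤ 2 := by
  have hlow := half_norm_le_norm_one_sub_exp hz
  have hzpos : 0 < ‖z‖ := norm_pos_iff.mpr hz0
  have hden : 1 - exp z ≠ 0 := norm_pos_iff.mp (by linarith)
  have hnum : ‖z + (1 - exp z)‖ ≤ ‖z‖ ^ 2 := by
    rw [show z + (1 - exp z) = -(exp z - 1 - z) by ring, norm_neg]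
    exact norm_exp_sub_one_sub_id_le (by linarith)
  rw [inv_add_inv hden hz0, norm_div, norm_mul, add_comm,
    div_le_iff₀ (mul_pos (by linarith) hzpos)]
  nlinarith

/-- Near the origin (with y < 0) the difference U₀(x,y) + x/(x²+y²) stays
bounded: U₀(x,y) = -x/(x²+y²) + O(1). -/
theorem stmt17 :
    ∃ C > (0 : ℝ), ∃ δ > (0 : ℝ), ∀ x y : ℝ, y < 0 → x ^ 2 + y ^ 2 < δ ^ 2 →
      |U0 x y + x / (x ^ 2 + y ^ 2)| ≤ C := by
  refine ⟨2, two_pos, 1 / 2, one_half_pos, fun x y hy hxy => ?_⟩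
  set z : ℂ := ⟨y, x⟩
  have hz0 : z ≠ 0 := fun h => hy.ne (congrArg re h)
  have hz : ‖z‖ ≤ 1 / 2 := by
    have hnorm : ‖z‖ ^ 2 = x ^ 2 + y ^ 2 := by
      rw [Complex.sq_norm, normSq_apply]; ring
    nlinarith [norm_nonneg z]
  rw [U0_eq_neg_im_inv_one_sub_exp, div_sq_add_sq_eq_neg_im_inv, ← neg_add, ← add_im, abs_neg]
  exact (abs_im_le_norm _).trans (norm_inv_one_sub_exp_add_inv_le hz0 hz)
end

section
/- Suppose U₀ : ℝ × (-2, 0) → ℝ is smooth and harmonic, and U₁ is defined by U₁(x,y) = (1/2)·[ (U₀)_yy(x,y)/2 - (U₀)_yy(x,-y-2)/2 - (y+1)·(U₀)_yyy(x,y) ]. Then U₁ satisfies (U₁)_xx + (U₁)_yy = -(U₀)_xxxx on ℝ × (-1, 0), together with the initial conditions U₁(x,-1) = 0 and (U₁)_y(x,-1) = 0. -/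
noncomputable def pdx (f : ℝ → ℝ → ℝ) (x y : ℝ) : ℝ := deriv (fun x' => f x' y) x
noncomputable def pdy (f : ℝ → ℝ → ℝ) (x y : ℝ) : ℝ := deriv (fun y' => f x y') y

open Set

namespace Stmt18Aux

def S : Set (ℝ × ℝ) := {p : ℝ × ℝ | p.2 ∈ Set.Ioo (-2 : ℝ) 0}

lemma isOpen_S : IsOpen S := isOpen_Ioo.preimage continuous_snd

noncomputable def D (v : ℝ × ℝ) (F : ℝ × ℝ → ℝ) : ℝ × ℝ → ℝ := fun p => fderiv ℝ F p v

lemma diffAt {E : Type*} [NormedAddCommGroup E] [NormedSpace ℝ E] {F : ℝ × ℝ → E}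
    (hF : ContDiffOn ℝ (⊤ : ℕ∞) F S) {p : ℝ × ℝ} (hp : p ∈ S) :
    DifferentiableAt ℝ F p :=
  (hF.contDiffAt (isOpen_S.mem_nhds hp)).differentiableAt (by simp)

lemma hasDerivAt_slice_x {F : ℝ × ℝ → ℝ} {x y : ℝ}
    (hF : DifferentiableAt ℝ F (x, y)) :
    HasDerivAt (fun x' => F (x', y)) (D (1,0) F (x,y)) x :=
  hF.hasFDerivAt.comp_hasDerivAt x ((hasDerivAt_id x).prodMk (hasDerivAt_const x y))

lemma hasDerivAt_slice_y {F : ℝ × ℝ → ℝ} {x y : ℝ}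
    (hF : DifferentiableAt ℝ F (x, y)) :
    HasDerivAt (fun y' => F (x, y')) (D (0,1) F (x,y)) y :=
  hF.hasFDerivAt.comp_hasDerivAt y ((hasDerivAt_const y x).prodMk (hasDerivAt_id y))

lemma pdx_eq {f : ℝ → ℝ → ℝ} {F : ℝ × ℝ → ℝ}
    (h : ∀ x y, y ∈ Ioo (-2:ℝ) 0 → f x y = F (x, y))
    (hF : ContDiffOn ℝ (⊤ : ℕ∞) F S) : ∀ x y, y ∈ Ioo (-2:ℝ) 0 →
    pdx f x y = D (1,0) F (x,y) := by
  intro x y hy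
  have h1 : (fun x' => f x' y) = fun x' => F (x', y) := funext fun x' => h x' y hy
  rw [pdx, h1]
  exact (hasDerivAt_slice_x (diffAt hF hy)).deriv

lemma pdy_eq {f : ℝ → ℝ → ℝ} {F : ℝ × ℝ → ℝ}
    (h : ∀ x y, y ∈ Ioo (-2:ℝ) 0 → f x y = F (x, y))
    (hF : ContDiffOn ℝ (⊤ : ℕ∞) F S) : ∀ x y, y ∈ Ioo (-2:ℝ) 0 →
    pdy f x y = D (0,1) F (x,y) := by
  intro x y hy
  have h1 : (fun y' => f x y') =ᶠ[nhds y] fun y' => F (x, y') := by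
    filter_upwards [isOpen_Ioo.mem_nhds hy] with y' hy' using h x y' hy'
  rw [pdy, h1.deriv_eq]
  exact (hasDerivAt_slice_y (diffAt hF hy)).deriv

lemma D_comm {F : ℝ × ℝ → ℝ} (hF : ContDiffOn ℝ (⊤ : ℕ∞) F S) {p : ℝ × ℝ} (hp : p ∈ S)
    (v w : ℝ × ℝ) : D v (D w F) p = D w (D v F) p := by
  have hd : DifferentiableAt ℝ (fderiv ℝ F) p :=
    diffAt (hF.fderiv_of_isOpen isOpen_S (by simp)) hp
  have key : ∀ u : ℝ × ℝ, fderiv ℝ (D u F) p =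
      (ContinuousLinearMap.apply ℝ ℝ u).comp (fderiv ℝ (fderiv ℝ F) p) := by
    intro u
    exact ((ContinuousLinearMap.apply ℝ ℝ u).hasFDerivAt.comp p hd.hasFDerivAt).fderiv
  have hsym : IsSymmSndFDerivAt ℝ F p :=
    (hF.contDiffAt (isOpen_S.mem_nhds hp)).isSymmSndFDerivAt (by rw [minSmoothness_of_isRCLikeNormedField]; exact WithTop.coe_le_coe.mpr le_top)
  show fderiv ℝ (D w F) p v = fderiv ℝ (D v F) p w
  rw [key, key]
  simpa using hsym.eq v w

lemma D_congr {G G' : ℝ × ℝ → ℝ} (h : ∀ q ∈ S, G q = G' q) {p : ℝ × ℝ} (hp : p ∈ S)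
    (v : ℝ × ℝ) : D v G p = D v G' p := by
  have hE : G =ᶠ[nhds p] G' := by
    filter_upwards [isOpen_S.mem_nhds hp] with q hq using h q hq
  simp only [D, hE.fderiv_eq]

lemma D_neg (B : ℝ × ℝ → ℝ) (p v : ℝ × ℝ) : D v (fun q => -(B q)) p = -(D v B p) := by
  simp [D, fderiv_neg]

lemma D_zero (p v : ℝ × ℝ) : D v (fun _ => (0:ℝ)) p = 0 := by simp [D]

lemma D_add {A B : ℝ × ℝ → ℝ} {p : ℝ × ℝ} (hA : DifferentiableAt ℝ A p)
    (hB : DifferentiableAt ℝ B p) (v : ℝ × ℝ) :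
    D v (fun q => A q + B q) p = D v A p + D v B p := by
  simp [D, fderiv_fun_add hA hB]

lemma D_const_mul {B : ℝ × ℝ → ℝ} {p : ℝ × ℝ} (hB : DifferentiableAt ℝ B p) (k : ℝ)
    (v : ℝ × ℝ) : D v (fun q => k * B q) p = k * D v B p := by
  simp [D, fderiv_const_mul hB]

lemma D_smooth {F : ℝ × ℝ → ℝ} (hF : ContDiffOn ℝ (⊤ : ℕ∞) F S) (v : ℝ × ℝ) :
    ContDiffOn ℝ (⊤ : ℕ∞) (D v F) S :=
  (hF.fderiv_of_isOpen isOpen_S (by simp)).clm_apply contDiffOn_const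

def σ : ℝ × ℝ → ℝ × ℝ := fun p => (p.1, -p.2 - 2)

noncomputable def σL : ℝ × ℝ →L[ℝ] ℝ × ℝ :=
  (ContinuousLinearMap.fst ℝ ℝ ℝ).prod (-(ContinuousLinearMap.snd ℝ ℝ ℝ))

lemma σL_apply (v : ℝ × ℝ) : σL v = (v.1, -v.2) := rfl

lemma σ_mapsTo : Set.MapsTo σ S S := by
  rintro ⟨x, y⟩ ⟨h1, h2⟩
  exact ⟨by dsimp [σ]; linarith, by dsimp [σ]; linarith⟩

lemma contDiff_σ : ContDiff ℝ (⊤ : ℕ∞) σ :=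
  contDiff_fst.prodMk ((contDiff_snd.neg).sub contDiff_const)

lemma hasFDerivAt_σ (p : ℝ × ℝ) : HasFDerivAt σ σL p :=
  hasFDerivAt_fst.prodMk ((hasFDerivAt_snd.neg).sub_const 2)

lemma comp_σ_smooth {A : ℝ × ℝ → ℝ} (hA : ContDiffOn ℝ (⊤ : ℕ∞) A S) :
    ContDiffOn ℝ (⊤ : ℕ∞) (fun q => A (σ q)) S :=
  hA.comp contDiff_σ.contDiffOn σ_mapsTo

lemma hasFDerivAt_comp_σ {A : ℝ × ℝ → ℝ} (hA : ContDiffOn ℝ (⊤ : ℕ∞) A S) {p : ℝ × ℝ}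
    (hp : p ∈ S) :
    HasFDerivAt (fun q => A (σ q)) ((fderiv ℝ A (σ p)).comp σL) p :=
  (diffAt hA (σ_mapsTo hp)).hasFDerivAt.comp p (hasFDerivAt_σ p)

noncomputable def Φ (a b c : ℝ) (A B C E : ℝ × ℝ → ℝ) : ℝ × ℝ → ℝ := fun p =>
  a * A p + b * B (σ p) + E p + c * ((p.2 + 1) * C p)

lemma Φ_smooth {a b c : ℝ} {A B C E : ℝ × ℝ → ℝ} (hA : ContDiffOn ℝ (⊤ : ℕ∞) A S)
    (hB : ContDiffOn ℝ (⊤ : ℕ∞) B S) (hC : ContDiffOn ℝ (⊤ : ℕ∞) C S) (hE : ContDiffOn ℝ (⊤ : ℕ∞) E S) :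
    ContDiffOn ℝ (⊤ : ℕ∞) (Φ a b c A B C E) S :=
  (((contDiffOn_const.mul hA).add (contDiffOn_const.mul (comp_σ_smooth hB))).add hE).add
    (contDiffOn_const.mul (((contDiff_snd.add contDiff_const).contDiffOn).mul hC))

lemma DΦ {a b c : ℝ} {A B C E : ℝ × ℝ → ℝ} (hA : ContDiffOn ℝ (⊤ : ℕ∞) A S)
    (hB : ContDiffOn ℝ (⊤ : ℕ∞) B S) (hC : ContDiffOn ℝ (⊤ : ℕ∞) C S) (hE : ContDiffOn ℝ (⊤ : ℕ∞) E S)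
    {p : ℝ × ℝ} (hp : p ∈ S) (v : ℝ × ℝ) :
    D v (Φ a b c A B C E) p =
      a * D v A p + b * fderiv ℝ B (σ p) (v.1, -v.2) + D v E p
        + c * (v.2 * C p + (p.2 + 1) * D v C p) := by
  have HA := (diffAt hA hp).hasFDerivAt
  have HB := hasFDerivAt_comp_σ hB hp
  have HC := (diffAt hC hp).hasFDerivAt
  have HE := (diffAt hE hp).hasFDerivAt
  have Hy : HasFDerivAt (fun q : ℝ × ℝ => q.2 + 1) (ContinuousLinearMap.snd ℝ ℝ ℝ) p :=
    hasFDerivAt_snd.add_const 1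
  have H := (((HA.const_mul a).add (HB.const_mul b)).add HE).add ((Hy.mul HC).const_mul c)
  have h2 : fderiv ℝ (fun q => ((a * A q + b * (fun r => B (σ r)) q) + E q)
    + c * ((fun r : ℝ × ℝ => r.2 + 1) q * C q)) p = _ := H.fderiv
  show fderiv ℝ (Φ a b c A B C E) p v = _
  rw [show (Φ a b c A B C E) = (fun q => ((a * A q + b * (fun r => B (σ r)) q) + E q)
    + c * ((fun r : ℝ × ℝ => r.2 + 1) q * C q)) from rfl, h2]
  simp [D, ContinuousLinearMap.smul_apply, σL_apply, mul_comm]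
  ring

lemma harm_D {A : ℝ × ℝ → ℝ} (hA : ContDiffOn ℝ (⊤ : ℕ∞) A S)
    (h : ∀ p ∈ S, D (1,0) (D (1,0) A) p + D (0,1) (D (0,1) A) p = 0) (v : ℝ × ℝ) :
    ∀ p ∈ S, D (1,0) (D (1,0) (D v A)) p + D (0,1) (D (0,1) (D v A)) p = 0 := by
  intro p hp
  have key : ∀ u : ℝ × ℝ, D u (D u (D v A)) p = D v (D u (D u A)) p := by
    intro u
    have swap : ∀ q ∈ S, D u (D v A) q = D v (D u A) q := fun q hq => D_comm hA hq u v
    rw [D_congr swap hp u]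
    exact D_comm (D_smooth hA u) hp u v
  rw [key, key]
  have hd1 : DifferentiableAt ℝ (D (1,0) (D (1,0) A)) p :=
    diffAt (D_smooth (D_smooth hA _) _) hp
  have hd2 : DifferentiableAt ℝ (D (0,1) (D (0,1) A)) p :=
    diffAt (D_smooth (D_smooth hA _) _) hp
  rw [← D_add hd1 hd2]
  have hz : ∀ q ∈ S, (fun q => D (1,0) (D (1,0) A) q + D (0,1) (D (0,1) A) q) q
      = (fun _ => (0:ℝ)) q := fun q hq => h q hq
  rw [D_congr hz hp v, D_zero]

lemma dx4 {A : ℝ × ℝ → ℝ} (hA : ContDiffOn ℝ (⊤ : ℕ∞) A S)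
    (h : ∀ p ∈ S, D (1,0) (D (1,0) A) p + D (0,1) (D (0,1) A) p = 0) :
    ∀ p ∈ S, D (1,0) (D (1,0) (D (1,0) (D (1,0) A))) p
      = D (0,1) (D (0,1) (D (0,1) (D (0,1) A))) p := by
  intro p hp
  have hB := harm_D (D_smooth hA (0,1)) (harm_D hA h (0,1)) (0,1)
  have s1 : ∀ q ∈ S, D (1,0) (D (1,0) A) q = -(D (0,1) (D (0,1) A) q) := by
    intro q hq; have := h q hq; linarith
  have s2 : ∀ q ∈ S, D (1,0) (D (1,0) (D (1,0) A)) q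
      = -(D (1,0) (D (0,1) (D (0,1) A)) q) := by
    intro q hq
    rw [D_congr s1 hq (1,0), D_neg]
  have s3 : D (1,0) (D (1,0) (D (1,0) (D (1,0) A))) p
      = -(D (1,0) (D (1,0) (D (0,1) (D (0,1) A))) p) := by
    rw [D_congr s2 hp (1,0), D_neg]
  have := hB p hp
  rw [s3]; linarith

noncomputable def Gdef (F : ℝ × ℝ → ℝ) : ℝ × ℝ → ℝ := fun p =>
  (1/2) * (D (0,1) (D (0,1) F) p / 2 - D (0,1) (D (0,1) F) (σ p) / 2
    - (p.2 + 1) * D (0,1) (D (0,1) (D (0,1) F)) p)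

lemma fderiv_apply_neg_e2 (B : ℝ × ℝ → ℝ) (q : ℝ × ℝ) :
    fderiv ℝ B q ((0:ℝ), (-1:ℝ)) = -(D (0,1) B q) := by
  have h : ((0:ℝ), (-1:ℝ)) = -(((0:ℝ), (1:ℝ)) : ℝ × ℝ) := by norm_num
  rw [h, map_neg]; rfl

section Main

variable {F : ℝ × ℝ → ℝ}

lemma G_eq_Φ (F : ℝ × ℝ → ℝ) : ∀ q ∈ S, Gdef F q
    = Φ (1/4) (-(1/4)) (-(1/2)) (D (0,1) (D (0,1) F)) (D (0,1) (D (0,1) F))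
        (D (0,1) (D (0,1) (D (0,1) F))) (fun _ => 0) q := by
  intro q hq; simp only [Gdef, Φ]; ring

lemma Gdef_smooth (hF : ContDiffOn ℝ (⊤ : ℕ∞) F S) : ContDiffOn ℝ (⊤ : ℕ∞) (Gdef F) S := by
  have hV := D_smooth (D_smooth hF (0,1)) (0,1)
  have hW := D_smooth hV (0,1)
  exact (Φ_smooth hV hV hW contDiffOn_const).congr (G_eq_Φ F)

lemma De1G (hF : ContDiffOn ℝ (⊤ : ℕ∞) F S) : ∀ q ∈ S, D (1,0) (Gdef F) q
    = Φ (1/4) (-(1/4)) (-(1/2)) (D (1,0) (D (0,1) (D (0,1) F)))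
        (D (1,0) (D (0,1) (D (0,1) F))) (D (1,0) (D (0,1) (D (0,1) (D (0,1) F))))
        (fun _ => 0) q := by
  intro q hq
  have hV := D_smooth (D_smooth hF (0,1)) (0,1)
  have hW := D_smooth hV (0,1)
  rw [D_congr (G_eq_Φ F) hq (1,0), DΦ hV hV hW contDiffOn_const hq (1,0)]
  simp only [Φ, D, fderiv_const, fderiv_fun_const, Pi.zero_apply, ContinuousLinearMap.zero_apply, neg_zero]
  ring

lemma De2G (hF : ContDiffOn ℝ (⊤ : ℕ∞) F S) : ∀ q ∈ S, D (0,1) (Gdef F) q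
    = Φ (1/4) (1/4) (-(1/2)) (D (0,1) (D (0,1) (D (0,1) F)))
        (D (0,1) (D (0,1) (D (0,1) F))) (D (0,1) (D (0,1) (D (0,1) (D (0,1) F))))
        (fun r => (-(1/2)) * D (0,1) (D (0,1) (D (0,1) F)) r) q := by
  intro q hq
  have hV := D_smooth (D_smooth hF (0,1)) (0,1)
  have hW := D_smooth hV (0,1)
  rw [D_congr (G_eq_Φ F) hq (0,1), DΦ hV hV hW contDiffOn_const hq (0,1)]
  rw [show (((0:ℝ),(1:ℝ)).1, -((0:ℝ),(1:ℝ)).2) = ((0:ℝ), (-1:ℝ)) by norm_num,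
    fderiv_apply_neg_e2]
  simp only [Φ, D, fderiv_const, fderiv_fun_const, Pi.zero_apply, ContinuousLinearMap.zero_apply, neg_zero]
  ring

lemma De1De1G (hF : ContDiffOn ℝ (⊤ : ℕ∞) F S) {p : ℝ × ℝ} (hp : p ∈ S) :
    D (1,0) (D (1,0) (Gdef F)) p
      = (1/4) * D (1,0) (D (1,0) (D (0,1) (D (0,1) F))) p
        - (1/4) * D (1,0) (D (1,0) (D (0,1) (D (0,1) F))) (σ p)
        - (1/2) * ((p.2 + 1) * D (1,0) (D (1,0) (D (0,1) (D (0,1) (D (0,1) F)))) p) := by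
  have hV := D_smooth (D_smooth hF (0,1)) (0,1)
  have hW := D_smooth hV (0,1)
  rw [D_congr (De1G hF) hp (1,0),
    DΦ (D_smooth hV (1,0)) (D_smooth hV (1,0)) (D_smooth hW (1,0)) contDiffOn_const hp (1,0)]
  simp only [D, fderiv_const, fderiv_fun_const, Pi.zero_apply, ContinuousLinearMap.zero_apply, neg_zero]
  ring

lemma De2De2G (hF : ContDiffOn ℝ (⊤ : ℕ∞) F S) {p : ℝ × ℝ} (hp : p ∈ S) :
    D (0,1) (D (0,1) (Gdef F)) p
      = (1/4) * D (0,1) (D (0,1) (D (0,1) (D (0,1) F))) p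
        - (1/4) * D (0,1) (D (0,1) (D (0,1) (D (0,1) F))) (σ p)
        - D (0,1) (D (0,1) (D (0,1) (D (0,1) F))) p
        - (1/2) * ((p.2 + 1) * D (0,1) (D (0,1) (D (0,1) (D (0,1) (D (0,1) F)))) p) := by
  have hV := D_smooth (D_smooth hF (0,1)) (0,1)
  have hW := D_smooth hV (0,1)
  rw [D_congr (De2G hF) hp (0,1),
    DΦ (D_smooth hV (0,1)) (D_smooth hV (0,1)) (D_smooth hW (0,1))
      (contDiffOn_const.mul hW) hp (0,1)]
  rw [show (((0:ℝ),(1:ℝ)).1, -((0:ℝ),(1:ℝ)).2) = ((0:ℝ), (-1:ℝ)) by norm_num,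
    fderiv_apply_neg_e2, D_const_mul (diffAt hW hp)]
  simp only [D]
  ring

lemma main (hF : ContDiffOn ℝ (⊤ : ℕ∞) F S)
    (hh : ∀ p ∈ S, D (1,0) (D (1,0) F) p + D (0,1) (D (0,1) F) p = 0) :
    ∀ p ∈ S, D (1,0) (D (1,0) (Gdef F)) p + D (0,1) (D (0,1) (Gdef F)) p
      = -(D (1,0) (D (1,0) (D (1,0) (D (1,0) F))) p) := by
  intro p hp
  have hΔV := harm_D (D_smooth hF (0,1)) (harm_D hF hh (0,1)) (0,1)
  have hΔW := harm_D (D_smooth (D_smooth hF (0,1)) (0,1)) hΔV (0,1)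
  have h1 := hΔV p hp
  have h2 := hΔV (σ p) (σ_mapsTo hp)
  have h3 := hΔW p hp
  have h4 := dx4 hF hh p hp
  have h3' : (p.2 + 1) * D (1,0) (D (1,0) (D (0,1) (D (0,1) (D (0,1) F)))) p
      + (p.2 + 1) * D (0,1) (D (0,1) (D (0,1) (D (0,1) (D (0,1) F)))) p = 0 := by
    have hz : D (1,0) (D (1,0) (D (0,1) (D (0,1) (D (0,1) F)))) p
        = -(D (0,1) (D (0,1) (D (0,1) (D (0,1) (D (0,1) F)))) p) := by linarith
    rw [hz]; ring
  rw [De1De1G hF hp, De2De2G hF hp]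
  linarith [h1, h2, h4, h3']

end Main

lemma bc (hF : ContDiffOn ℝ (⊤ : ℕ∞) F S) (x : ℝ) : D (0,1) (Gdef F) (x, -1) = 0 := by
  have hm : ((x, (-1:ℝ)) : ℝ × ℝ) ∈ S := by
    constructor <;> norm_num
  rw [De2G hF _ hm]
  have hσ : σ (x, (-1:ℝ)) = (x, -1) := by simp [σ]; norm_num
  simp only [Φ, hσ]
  norm_num
  ring

end Stmt18Aux

open Stmt18Aux Set

/-- First-order corrector of the perturbation series: if U₀ is smooth and
harmonic on ℝ × (-2,0) and
U₁(x,y) = ½[(U₀)_yy(x,y)/2 - (U₀)_yy(x,-y-2)/2 - (y+1)(U₀)_yyy(x,y)],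
then (U₁)_xx + (U₁)_yy = -(U₀)_xxxx on ℝ × (-1,0), with U₁(x,-1) = 0 and
(U₁)_y(x,-1) = 0. -/
theorem stmt18 (U₀ : ℝ → ℝ → ℝ)
    (hsmooth : ContDiffOn ℝ (⊤ : ℕ∞) (fun p : ℝ × ℝ => U₀ p.1 p.2)
      {p : ℝ × ℝ | p.2 ∈ Set.Ioo (-2 : ℝ) 0})
    (hharm : ∀ x y : ℝ, y ∈ Set.Ioo (-2 : ℝ) 0 →
      pdx (pdx U₀) x y + pdy (pdy U₀) x y = 0)
    (U₁ : ℝ → ℝ → ℝ)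
    (hU₁ : U₁ = fun x y =>
      (1 / 2) * (pdy (pdy U₀) x y / 2 - pdy (pdy U₀) x (-y - 2) / 2
        - (y + 1) * pdy (pdy (pdy U₀)) x y)) :
    (∀ x y : ℝ, y ∈ Set.Ioo (-1 : ℝ) 0 →
      pdx (pdx U₁) x y + pdy (pdy U₁) x y = -pdx (pdx (pdx (pdx U₀))) x y) ∧
    (∀ x : ℝ, U₁ x (-1) = 0 ∧ pdy U₁ x (-1) = 0) := by
  have hF : ContDiffOn ℝ (⊤ : ℕ∞) (fun p : ℝ × ℝ => U₀ p.1 p.2) S := hsmooth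
  set F : ℝ × ℝ → ℝ := fun p => U₀ p.1 p.2 with hFdef
  have h0 : ∀ x y, y ∈ Ioo (-2:ℝ) 0 → U₀ x y = F (x, y) := fun _ _ _ => rfl
  have cy1 := pdy_eq h0 hF
  have cy2 := pdy_eq cy1 (D_smooth hF (0,1))
  have cy3 := pdy_eq cy2 (D_smooth (D_smooth hF (0,1)) (0,1))
  have cx1 := pdx_eq h0 hF
  have cx2 := pdx_eq cx1 (D_smooth hF (1,0))
  have cx3 := pdx_eq cx2 (D_smooth (D_smooth hF (1,0)) (1,0))
  have cx4 := pdx_eq cx3 (D_smooth (D_smooth (D_smooth hF (1,0)) (1,0)) (1,0))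
  have hharm' : ∀ p ∈ S, D (1,0) (D (1,0) F) p + D (0,1) (D (0,1) F) p = 0 := by
    rintro ⟨x, y⟩ hp
    rw [← cx2 x y hp, ← cy2 x y hp]
    exact hharm x y hp
  have hU₁G : ∀ x y, y ∈ Ioo (-2:ℝ) 0 → U₁ x y = Gdef F (x, y) := by
    intro x y hy
    have hy' : -y - 2 ∈ Ioo (-2:ℝ) 0 := ⟨by linarith [hy.2], by linarith [hy.1]⟩
    rw [hU₁]
    show (1 / 2) * (pdy (pdy U₀) x y / 2 - pdy (pdy U₀) x (-y - 2) / 2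
        - (y + 1) * pdy (pdy (pdy U₀)) x y) = _
    rw [cy2 x y hy, cy2 x (-y-2) hy', cy3 x y hy]
    rfl
  have hG := Gdef_smooth hF
  constructor
  · intro x y hy
    have hy2 : y ∈ Ioo (-2:ℝ) 0 := ⟨by linarith [hy.1], hy.2⟩
    have cgx1 := pdx_eq hU₁G hG
    have cgx2 := pdx_eq cgx1 (D_smooth hG (1,0))
    have cgy1 := pdy_eq hU₁G hG
    have cgy2 := pdy_eq cgy1 (D_smooth hG (0,1))
    rw [cgx2 x y hy2, cgy2 x y hy2, cx4 x y hy2]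
    exact main hF hharm' (x, y) hy2
  · intro x
    constructor
    · rw [hU₁]
      norm_num
    · have hm : (-1:ℝ) ∈ Ioo (-2:ℝ) 0 := by norm_num
      rw [pdy_eq hU₁G hG x (-1) hm]
      exact bc hF x
end
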